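/- Let m > 1 be an integer with exactly t distinct prime divisors and square-free part (radical) m₀, let q be an odd prime power with m₀ dividing q − 1, and let d be a nonzero element of 𝔽_q. Set C = 2^t·m₀/φ(m₀). If q > (C + 4)², then there exists λ ∈ 𝔽_q such that λ² + d is not a p-th power in 𝔽_q for any prime p dividing m. -/

import Mathlib

/-!
Suppose every `λ² + d` is a `p`-th power for some prime `p ∣ m`. For characters `χ_p` of order
`p`, the function `∏_p (1 - p⁻¹ ∑_{j<p} χ_p(x)^j)` vanishes on `p`-th powers, and `1 + η(x - d)`
(with `η` the quadratic character) vanishes unless `x - d` is a square, i.e. unless `x = λ² + d`.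
So the sum over `x` of their product is zero. Expanding the product into characters, the trivial
character contributes `∏_p (1 - p⁻¹) (q - 1 - η(-d))`, while each nontrivial one contributes a
Jacobi sum of absolute value at most `√q`, with total weight at most `2^t ∏_p (1 - p⁻¹)`. Hence
`q - 2 ≤ 2^t √q`, which fails once `√q > C + 4 ≥ 2^t + 4`.
-/

open Finset

namespace MulChar

variable {R R' : Type*} [CommMonoid R] [CommMonoidWithZero R']

lemma prod_apply_coe {ι : Type*} (s : Finset ι) (χ : ι → MulChar R R') (a : Rˣ) :
    (∏ i ∈ s, χ i) a = ∏ i ∈ s, χ i a :=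
  map_prod (MonoidHom.mk ⟨fun ψ : MulChar R R' ↦ ψ a, one_apply_coe a⟩
    fun ψ ψ' ↦ mul_apply ψ ψ' a) χ s

lemma norm_apply_eq_one {F : Type*} [Field F] [Fintype F] (χ : MulChar F ℂ) {a : F}
    (ha : a ≠ 0) : ‖χ a‖ = 1 := by
  have : Fintype Fˣ := Fintype.ofFinite _
  have : NeZero (Fintype.card Fˣ) := ⟨Fintype.card_ne_zero⟩
  simpa using Complex.norm_eq_one_of_mem_rootsOfUnity (χ.apply_mem_rootsOfUnity (Units.mk0 a ha))

end MulChar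

section ShiftedSum

variable {F : Type*} [Field F] [Fintype F] {η : MulChar F ℂ} {d : F}

lemma norm_jacobiSum_le_sqrt_card {χ ψ : MulChar F ℂ} (hχ : χ ≠ 1) (hψ : ψ ≠ 1) :
    ‖jacobiSum χ ψ‖ ≤ √(Fintype.card F) := by
  classical
  by_cases hχψ : χ * ψ = 1
  · rw [eq_inv_of_mul_eq_one_right hχψ, jacobiSum_nontrivial_inv hχ, norm_neg,
      χ.norm_apply_eq_one (neg_ne_zero.mpr one_ne_zero)]
    exact Real.one_le_sqrt.mpr (by exact_mod_cast Fintype.card_pos)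
  · have hchar : ringChar ℂ ≠ ringChar F := by
      rw [ringChar.eq_zero]
      exact (CharP.char_is_prime F (ringChar F)).ne_zero.symm
    have key := jacobiSum_mul_jacobiSum_inv hchar hχ hψ hχψ
    have hconj : jacobiSum χ⁻¹ ψ⁻¹ = starRingEnd ℂ (jacobiSum χ ψ) := by
      simp only [← MulChar.star_eq_inv, jacobiSum, map_sum, map_mul]
      rfl
    rw [hconj, Complex.mul_conj] at key
    rw [Complex.norm_def, show Complex.normSq (jacobiSum χ ψ) = Fintype.card F by
      exact_mod_cast key]

lemma sum_mul_apply_sub_eq_jacobiSum (χ ψ : MulChar F ℂ) (hd : d ≠ 0) :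
    ∑ x, χ x * ψ (x - d) = χ d * ψ (-d) * jacobiSum χ ψ := by
  rw [jacobiSum, mul_sum, ← Equiv.sum_comp (Equiv.mulLeft₀ d hd)]
  refine Fintype.sum_congr _ _ fun y ↦ ?_
  simp only [Equiv.mulLeft₀_apply, map_mul, show d * y - d = -d * (1 - y) by ring]
  ring

lemma sum_mul_one_add_apply_sub (ψ η : MulChar F ℂ) (hd : d ≠ 0) :
    ∑ x, ψ x * (1 + η (x - d)) = ∑ x, ψ x + ψ d * η (-d) * jacobiSum ψ η := by
  simp only [mul_add, mul_one, sum_add_distrib, sum_mul_apply_sub_eq_jacobiSum ψ η hd]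

lemma norm_sum_mul_one_add_apply_sub_le {ψ : MulChar F ℂ} (hψ : ψ ≠ 1) (hη : η ≠ 1)
    (hd : d ≠ 0) : ‖∑ x, ψ x * (1 + η (x - d))‖ ≤ √(Fintype.card F) := by
  rw [sum_mul_one_add_apply_sub ψ η hd, MulChar.sum_eq_zero_of_ne_one hψ, zero_add, norm_mul,
    norm_mul, ψ.norm_apply_eq_one hd, η.norm_apply_eq_one (neg_ne_zero.mpr hd), one_mul, one_mul]
  exact norm_jacobiSum_le_sqrt_card hψ hη

lemma card_sub_two_le_norm_sum_one_mul_one_add_apply_sub (hη : η ≠ 1) (hd : d ≠ 0) :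
    (Fintype.card F : ℝ) - 2 ≤ ‖∑ x, (1 : MulChar F ℂ) x * (1 + η (x - d))‖ := by
  classical
  have hq : 1 ≤ Fintype.card F := Fintype.card_pos
  rw [sum_mul_one_add_apply_sub 1 η hd, MulChar.sum_one_eq_card_units, Fintype.card_units,
    jacobiSum_one_nontrivial hη, MulChar.one_apply hd.isUnit, one_mul, Nat.cast_sub hq]
  have hη' : ‖η (-d)‖ = 1 := η.norm_apply_eq_one (neg_ne_zero.mpr hd)
  have hcard : ‖((Fintype.card F : ℂ) - (1 : ℕ))‖ = Fintype.card F - 1 := by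
    rw [Nat.cast_one, ← Nat.cast_pred hq, Complex.norm_natCast, Nat.cast_pred hq]
  calc (Fintype.card F : ℝ) - 2 = ‖((Fintype.card F : ℂ) - (1 : ℕ))‖ - ‖η (-d)‖ := by
        rw [hcard, hη']; ring
    _ ≤ ‖((Fintype.card F : ℂ) - (1 : ℕ)) - η (-d)‖ := norm_sub_norm_le _ _
    _ = _ := by ring_nf

end ShiftedSum

lemma dvd_of_prod_pow_eq_one {G ι : Type*} [CommMonoid G] [Fintype ι] [DecidableEq ι]
    {g : ι → G} {n : ι → ℕ} (hg : ∀ i, orderOf (g i) = n i)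
    (hn : Pairwise fun i j ↦ Nat.Coprime (n i) (n j))
    {e : ι → ℕ} (he : ∏ i, g i ^ e i = 1) (i : ι) : n i ∣ e i := by
  set N := ∏ j ∈ univ.erase i, n j
  have hkill : ∀ j ≠ i, (g j ^ e j) ^ N = 1 := fun j hj ↦ by
    have : g j ^ N = 1 := orderOf_dvd_iff_pow_eq_one.mp <| by
      rw [hg j]; exact dvd_prod_of_mem n (mem_erase.mpr ⟨hj, mem_univ j⟩)
    rw [← pow_mul, mul_comm, pow_mul, this, one_pow]
  have hi : g i ^ (e i * N) = 1 := by
    rw [pow_mul, ← Fintype.prod_eq_single i hkill, prod_pow, he, one_pow]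
  have hcop : Nat.Coprime (n i) N :=
    Nat.Coprime.prod_right fun j hj ↦ hn (ne_of_mem_erase hj).symm
  exact hcop.dvd_of_dvd_mul_right (hg i ▸ orderOf_dvd_of_pow_eq_one hi)

/-- `∑_{j<p} sieveCoeff p j * z ^ j = 1 - p⁻¹ ∑_{j<p} z ^ j`, which vanishes at `z = 1`. -/
noncomputable def sieveCoeff (p j : ℕ) : ℝ := (if j = 0 then 1 else 0) - (p : ℝ)⁻¹

lemma sum_sieveCoeff {p : ℕ} (hp : p ≠ 0) : ∑ j ∈ range p, sieveCoeff p j = 0 := by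
  simp [sieveCoeff, sum_sub_distrib, Nat.pos_of_ne_zero hp, hp]

lemma sum_abs_sieveCoeff {p : ℕ} (hp : p ≠ 0) :
    ∑ j ∈ range p, |sieveCoeff p j| = 2 * (1 - (p : ℝ)⁻¹) := by
  obtain ⟨n, rfl⟩ := Nat.exists_eq_succ_of_ne_zero hp
  have hinv : ((n + 1 : ℕ) : ℝ)⁻¹ ≤ 1 := inv_le_one_of_one_le₀ (by simp)
  have hsucc : ∀ j, |sieveCoeff (n + 1) (j + 1)| = ((n + 1 : ℕ) : ℝ)⁻¹ := fun j ↦ by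
    rw [sieveCoeff, if_neg j.succ_ne_zero, zero_sub, abs_neg, abs_of_nonneg (by positivity)]
  have hzero : |sieveCoeff (n + 1) 0| = 1 - ((n + 1 : ℕ) : ℝ)⁻¹ := by
    rw [sieveCoeff, if_pos rfl]
    exact abs_of_nonneg (sub_nonneg.mpr hinv)
  rw [sum_range_succ', hzero]
  simp only [hsucc, sum_const, card_range, nsmul_eq_mul]
  field_simp
  push_cast
  ring

section Sieve

variable {F : Type*} [Field F] {P : Finset ℕ}

/-- The coefficients of `∏_{p ∈ P} ∑_{j<p} sieveCoeff p j * χ_p(x) ^ j`, expanded as a sum over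
exponent vectors `J` of the characters `sieveChar P χ J`. -/
noncomputable def sieveWeight (P : Finset ℕ) (J : P → ℕ) : ℝ := ∏ p : P, sieveCoeff p (J p)

noncomputable def sieveChar (P : Finset ℕ) (χ : ℕ → MulChar F ℂ) (J : P → ℕ) : MulChar F ℂ :=
  ∏ p : P, χ p ^ J p

variable (P) in
lemma sieveWeight_zero : sieveWeight P 0 = ∏ p ∈ P, (1 - (p : ℝ)⁻¹) := by
  simp [sieveWeight, sieveCoeff, prod_attach P fun p ↦ 1 - (p : ℝ)⁻¹]

lemma sum_abs_sieveWeight (hP : ∀ p ∈ P, p ≠ 0) :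
    ∑ J ∈ Fintype.piFinset fun p : P ↦ range p, |sieveWeight P J| =
      2 ^ #P * ∏ p ∈ P, (1 - (p : ℝ)⁻¹) := by
  simp only [sieveWeight, abs_prod]
  rw [← prod_univ_sum (fun p : P ↦ range p) fun p j ↦ |sieveCoeff p j|]
  calc ∏ p : P, ∑ j ∈ range p, |sieveCoeff p j| = ∏ p : P, 2 * (1 - (p : ℝ)⁻¹) :=
        prod_congr rfl fun p _ ↦ sum_abs_sieveCoeff (hP p p.2)
    _ = 2 ^ #P * ∏ p ∈ P, (1 - (p : ℝ)⁻¹) := by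
        rw [prod_mul_distrib, prod_const, card_univ, Fintype.card_coe,
          prod_coe_sort P fun p ↦ 1 - (p : ℝ)⁻¹]

variable (P) in
lemma sieveChar_zero (χ : ℕ → MulChar F ℂ) : sieveChar P χ 0 = 1 := by
  simp [sieveChar]

lemma sieveChar_ne_one {χ : ℕ → MulChar F ℂ} (hP : ∀ p ∈ P, p.Prime)
    (hχ : ∀ p ∈ P, orderOf (χ p) = p) {J : P → ℕ}
    (hJ : J ∈ Fintype.piFinset fun p : P ↦ range p) (hJ0 : J ≠ 0) : sieveChar P χ J ≠ 1 := by
  classical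
  obtain ⟨p, hp⟩ := Function.ne_iff.mp hJ0
  intro h
  have hdvd := dvd_of_prod_pow_eq_one (g := fun p : P ↦ χ p) (n := fun p : P ↦ (p : ℕ))
    (fun p ↦ hχ p p.2) (fun p r hpr ↦ (Nat.coprime_primes (hP p p.2) (hP r r.2)).mpr
      (Subtype.coe_ne_coe.mpr hpr)) h p
  exact hp (Nat.eq_zero_of_dvd_of_lt hdvd (mem_range.mp (Fintype.mem_piFinset.mp hJ p)))

lemma sum_sieveWeight_mul_sieveChar_pow_eq_zero {χ : ℕ → MulChar F ℂ} {p : ℕ} (hp : p ∈ P)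
    (hp0 : p ≠ 0) (hχ : χ p ^ p = 1) (b : F) :
    ∑ J ∈ Fintype.piFinset fun p : P ↦ range p,
      (sieveWeight P J : ℂ) * sieveChar P χ J (b ^ p) = 0 := by
  rcases eq_or_ne b 0 with rfl | hb
  · simp [zero_pow hp0, MulChar.map_zero]
  have hunit : IsUnit (b ^ p) := hb.isUnit.pow p
  have hχb : χ p (b ^ p) = 1 := by
    rw [map_pow, ← MulChar.pow_apply' _ hp0, hχ, MulChar.one_apply hb.isUnit]
  rw [← hunit.unit_spec] at hχb ⊢
  simp only [sieveWeight, sieveChar, MulChar.prod_apply_coe,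
    MulChar.pow_apply_coe, Complex.ofReal_prod, ← prod_mul_distrib]
  rw [← prod_univ_sum (fun p : P ↦ range p) fun p j ↦ (sieveCoeff p j : ℂ) * χ p hunit.unit ^ j]
  refine prod_eq_zero (mem_univ ⟨p, hp⟩) ?_
  simp only [hχb, one_pow, mul_one]
  exact_mod_cast sum_sieveCoeff hp0

lemma sum_sieveWeight_mul_sum_eq_zero [Fintype F] {χ : ℕ → MulChar F ℂ}
    (hP : ∀ p ∈ P, p.Prime) (hχ : ∀ p ∈ P, orderOf (χ p) = p) {η : MulChar F ℂ}
    (hη : ∀ y, ¬IsSquare y → η y = -1) {d : F}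
    (h : ∀ lam : F, ∃ p ∈ P, ∃ b : F, b ^ p = lam ^ 2 + d) :
    ∑ J ∈ Fintype.piFinset fun p : P ↦ range p,
      (sieveWeight P J : ℂ) * ∑ x, sieveChar P χ J x * (1 + η (x - d)) = 0 := by
  simp only [mul_sum, ← mul_assoc]
  rw [sum_comm]
  refine sum_eq_zero fun x _ ↦ ?_
  rw [← sum_mul]
  by_cases hx : IsSquare (x - d)
  · obtain ⟨r, hr⟩ := hx
    obtain ⟨p, hp, b, hb⟩ := h r
    rw [show x = b ^ p by rw [hb, sq, ← hr]; ring, sum_sieveWeight_mul_sieveChar_pow_eq_zero hp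
      (hP p hp).ne_zero (orderOf_dvd_iff_pow_eq_one.mp (hχ p hp).dvd) b, zero_mul]
  · rw [hη _ hx, add_neg_cancel, mul_zero]

end Sieve

lemma exists_mulChar_orderOf_forall {F : Type*} [Field F] [Fintype F] {P : Finset ℕ}
    (hP : ∀ p ∈ P, p.Prime) (hPq : ∀ p ∈ P, p ∣ Fintype.card F - 1) :
    ∃ χ : ℕ → MulChar F ℂ, ∀ p ∈ P, orderOf (χ p) = p := by
  have h : ∀ p, ∃ χ : MulChar F ℂ, p ∈ P → orderOf χ = p := fun p ↦ by
    by_cases hp : p ∈ P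
    · obtain ⟨χ, hχ⟩ := MulChar.exists_mulChar_orderOf F (hPq p hp)
        (Complex.isPrimitiveRoot_exp p (hP p hp).ne_zero)
      exact ⟨χ, fun _ ↦ hχ⟩
    · exact ⟨1, fun h ↦ absurd h hp⟩
  choose χ hχ using h
  exact ⟨χ, hχ⟩

lemma norm_mul_norm_le_of_sum_eq_zero {𝕜 κ : Type*} [NormedField 𝕜] [DecidableEq κ]
    {s : Finset κ} {k₀ : κ} (hk₀ : k₀ ∈ s) {c v : κ → 𝕜} {B : ℝ}
    (hB : ∀ k ∈ s, k ≠ k₀ → ‖v k‖ ≤ B) (hsum : ∑ k ∈ s, c k * v k = 0) :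
    ‖c k₀‖ * ‖v k₀‖ ≤ (∑ k ∈ s.erase k₀, ‖c k‖) * B := by
  rw [← add_sum_erase s _ hk₀, add_eq_zero_iff_eq_neg] at hsum
  rw [← norm_mul, hsum, norm_neg, sum_mul]
  refine (norm_sum_le _ _).trans (sum_le_sum fun k hk ↦ ?_)
  rw [norm_mul]
  exact mul_le_mul_of_nonneg_left (hB k (mem_of_mem_erase hk) (ne_of_mem_erase hk))
    (norm_nonneg _)

theorem card_sub_two_le_of_forall_exists_pow {F : Type*} [Field F] [Fintype F]
    (hF : ringChar F ≠ 2) {d : F} (hd : d ≠ 0) {P : Finset ℕ} (hP : ∀ p ∈ P, p.Prime)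
    (hPq : ∀ p ∈ P, p ∣ Fintype.card F - 1)
    (h : ∀ lam : F, ∃ p ∈ P, ∃ b : F, b ^ p = lam ^ 2 + d) :
    (Fintype.card F : ℝ) - 2 ≤ 2 ^ #P * √(Fintype.card F) := by
  classical
  obtain ⟨χ, hχ⟩ := exists_mulChar_orderOf_forall hP hPq
  set η : MulChar F ℂ := (quadraticChar F).ringHomComp (Int.castRingHom ℂ)
  have hη : η ≠ 1 :=
    (MulChar.ringHomComp_ne_one_iff (RingHom.injective_int _)).mpr (quadraticChar_ne_one hF)
  have hη_nonsquare : ∀ y, ¬IsSquare y → η y = -1 := fun y hy ↦ by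
    simp [η, quadraticChar_neg_one_iff_not_isSquare.mpr hy]
  have h0 : (0 : P → ℕ) ∈ Fintype.piFinset fun p : P ↦ range p :=
    Fintype.mem_piFinset.mpr fun p ↦ mem_range.mpr (hP p p.2).pos
  have hA : 0 < sieveWeight P 0 := by
    rw [sieveWeight_zero]
    exact prod_pos fun p hp ↦
      sub_pos.mpr (inv_lt_one_of_one_lt₀ (by exact_mod_cast (hP p hp).one_lt))
  have key := norm_mul_norm_le_of_sum_eq_zero h0
    (fun J hJ hJ0 ↦ norm_sum_mul_one_add_apply_sub_le (sieveChar_ne_one hP hχ hJ hJ0) hη hd)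
    (sum_sieveWeight_mul_sum_eq_zero hP hχ hη_nonsquare h)
  simp only [sieveChar_zero, Complex.norm_real, Real.norm_eq_abs, abs_of_pos hA] at key
  have herase : ∑ J ∈ (Fintype.piFinset fun p : P ↦ range p).erase 0,
      |sieveWeight P J| ≤ 2 ^ #P * sieveWeight P 0 := by
    rw [sieveWeight_zero, ← sum_abs_sieveWeight fun p hp ↦ (hP p hp).ne_zero]
    exact sum_le_sum_of_subset_of_nonneg (erase_subset _ _) fun _ _ _ ↦ abs_nonneg _
  have := (mul_le_mul_of_nonneg_left (card_sub_two_le_norm_sum_one_mul_one_add_apply_sub hη hd)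
    hA.le).trans (key.trans (mul_le_mul_of_nonneg_right herase (Real.sqrt_nonneg _)))
  exact le_of_mul_le_mul_left (this.trans_eq (by ring)) hA

lemma le_mul_div_totient {x : ℝ} (hx : 0 ≤ x) {n : ℕ} (hn : 0 < n) :
    x ≤ x * n / n.totient := by
  rw [le_div_iff₀ (by exact_mod_cast Nat.totient_pos.mpr hn)]
  exact mul_le_mul_of_nonneg_left (by exact_mod_cast Nat.totient_le n) hx

lemma mul_sqrt_lt_sub_two {a C q : ℝ} (ha : 0 ≤ a) (haC : a ≤ C) (hq : (C + 4) ^ 2 < q) :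
    a * √q < q - 2 := by
  have hsqrt : C + 4 < √q := Real.lt_sqrt_of_sq_lt hq
  have hq0 : 0 ≤ q := (sq_nonneg _).trans hq.le
  nlinarith [Real.sq_sqrt hq0]

theorem stmt_10_general (m : ℕ) (hm : 1 < m) (q : ℕ) (hqodd : Odd q)
    (hdvd : (∏ p ∈ m.primeFactors, p) ∣ q - 1)
    (F : Type*) [Field F] [Fintype F] (hcard : Fintype.card F = q)
    (d : F) (hd : d ≠ 0)
    (hqC : ((2 : ℝ) ^ m.primeFactors.card * ((∏ p ∈ m.primeFactors, p : ℕ) : ℝ) /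
        (Nat.totient (∏ p ∈ m.primeFactors, p) : ℝ) + 4) ^ 2 < (q : ℝ)) :
    ∃ lam : F, ∀ p : ℕ, p.Prime → p ∣ m → ∀ b : F, b ^ p ≠ lam ^ 2 + d := by
  by_contra! hpow
  have hF : ringChar F ≠ 2 := fun h ↦ by
    have := FiniteField.even_card_iff_char_two.mp h
    rw [hcard, Nat.even_iff.symm] at this
    exact Nat.not_even_iff_odd.mpr hqodd this
  have hbound := card_sub_two_le_of_forall_exists_pow hF hd
    (fun p hp ↦ Nat.prime_of_mem_primeFactors hp)
    (fun p hp ↦ hcard ▸ (dvd_prod_of_mem _ hp).trans hdvd) fun lam ↦ by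
      obtain ⟨p, hp, hpm, b, hb⟩ := hpow lam
      exact ⟨p, Nat.mem_primeFactors.mpr ⟨hp, hpm, by omega⟩, b, hb⟩
  rw [hcard] at hbound
  have hC := le_mul_div_totient (x := 2 ^ m.primeFactors.card) (by positivity)
    (prod_pos fun p (hp : p ∈ m.primeFactors) ↦ (Nat.prime_of_mem_primeFactors hp).pos)
  exact (mul_sqrt_lt_sub_two (by positivity) hC hqC).not_ge hbound

/-- Let `m > 1` have exactly `t` distinct prime divisors and radical `m₀`, let `q` be an
odd prime power with `m₀ ∣ q - 1`, and `d ∈ 𝔽_q` nonzero.  Set `C = 2^t m₀ / φ(m₀)`.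
If `q > (C + 4)²` then there exists `λ ∈ 𝔽_q` such that `λ² + d` is not a `p`-th power in
`𝔽_q` for any prime `p` dividing `m`. -/
theorem stmt_10 (m : ℕ) (hm : 1 < m) (q : ℕ) (hqodd : Odd q) (hq : IsPrimePow q)
    (hdvd : (∏ p ∈ m.primeFactors, p) ∣ q - 1)
    (F : Type*) [Field F] [Fintype F] (hcard : Fintype.card F = q)
    (d : F) (hd : d ≠ 0)
    (hqC : ((2 : ℝ) ^ m.primeFactors.card * ((∏ p ∈ m.primeFactors, p : ℕ) : ℝ) /
        (Nat.totient (∏ p ∈ m.primeFactors, p) : ℝ) + 4) ^ 2 < (q : ℝ)) :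
    ∃ lam : F, ∀ p : ℕ, p.Prime → p ∣ m → ∀ b : F, b ^ p ≠ lam ^ 2 + d :=
  stmt_10_general m hm q hqodd hdvd F hcard d hd hqC
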